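/- arXiv:1708.03583 — 2 statements merged into one kernel-verified Lean document; each statement's English description precedes it below -/
import Mathlib

section
/- For every n ≥ 1 there exists a Δ⁰₂ set that is (n+1)-c.e. but not n-c.e.; that is, the oscillation (difference) hierarchy restricted to {0,1}-valued functions is proper at every level. -/
/-!
The diagonal set is defined from a counter that is monotone and bounded by `n`: membership of `e`
is the parity of its limit, so the set is `(n+1)`-c.e. (one change to leave the initial `false`,
then one per increase of the counter). Against the program with index `e` we let the counter
follow, by dovetailing, the values that program outputs on `(e, t)`. If `f` witnessed that the
set is `n`-c.e., some index `e` computes `t ↦` the number of changes of `f e` below `t`; the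
counter then converges to the total number `K ≤ n` of changes of `f e`, so `e` is in the set iff
`K` is even, while the final value of `f e`, which starts at `false`, is `true` iff `K` is odd.
-/

/-- `A` is an `n`-c.e. set: it has a computable `{0,1}`-valued approximation
starting at `false`, converging to the characteristic function of `A`, and
changing its value at most `n` times on each argument. -/
def NCE (n : ℕ) (A : Set ℕ) : Prop :=
  ∃ f : ℕ → ℕ → Bool, Computable₂ f ∧ ∀ x,
    f x 0 = false ∧ (∃ s, ∀ t, s ≤ t → (f x t = true ↔ x ∈ A)) ∧
    {s | f x s ≠ f x (s + 1)}.Finite ∧ {s | f x s ≠ f x (s + 1)}.ncard ≤ n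

namespace DifferenceHierarchy

open Filter Nat.Partrec Nat.Partrec.Code

section Sequences

variable {α : Type*}

def changes (v : ℕ → α) : Set ℕ := {s | v s ≠ v (s + 1)}

theorem exists_forall_ge_eq_of_changes_finite {v : ℕ → α} (h : (changes v).Finite) :
    ∃ T, ∀ t, T ≤ t → v t = v T := by
  obtain ⟨N, hN⟩ := h.bddAbove
  refine eventuallyConst_atTop.mp (eventuallyConst_atTop_nat.mpr ⟨N + 1, fun m hm => ?_⟩)
  by_contra hne
  have : m ≤ N := hN (Ne.symm hne)
  omega

theorem changes_finite_and_ncard_le_of_monotone {u : ℕ → ℕ} (hu : Monotone u) {n : ℕ}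
    (hn : ∀ s, u s ≤ n) : (changes u).Finite ∧ (changes u).ncard ≤ n := by
  have hlt : ∀ s ∈ changes u, u s < u (s + 1) := fun s hs => (hu s.le_succ).lt_of_ne hs
  have hmaps : Set.MapsTo u (changes u) (Set.Iio n) := fun s hs => (hlt s hs).trans_le (hn _)
  have hinj : Set.InjOn u (changes u) :=
    StrictMonoOn.injOn fun s hs _ _ hst => (hlt s hs).trans_le (hu hst)
  refine ⟨(Set.finite_Iio n).of_injOn hmaps hinj, ?_⟩
  calc (changes u).ncard ≤ (Set.Iio n).ncard := Set.ncard_le_ncard_of_injOn u hmaps hinj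
    _ = n := by rw [← Finset.coe_Iio, Set.ncard_coe_finset, Nat.card_Iio]

variable [DecidableEq α]

def numChanges (v : ℕ → α) (t : ℕ) : ℕ := ((Finset.range t).filter fun u => v u ≠ v (u + 1)).card

theorem numChanges_succ (v : ℕ → α) (t : ℕ) :
    numChanges v (t + 1) = numChanges v t + if v t = v (t + 1) then 0 else 1 := by
  simp only [numChanges, Finset.card_filter, Finset.sum_range_succ, ite_not]

theorem numChanges_mono (v : ℕ → α) : Monotone (numChanges v) :=
  monotone_nat_of_le_succ fun t => by rw [numChanges_succ]; exact Nat.le_add_right _ _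

theorem numChanges_le_ncard {v : ℕ → α} (h : (changes v).Finite) (t : ℕ) :
    numChanges v t ≤ (changes v).ncard := by
  rw [numChanges, ← Set.ncard_coe_finset]
  exact Set.ncard_le_ncard (fun u hu => (Finset.mem_filter.mp hu).2) h

theorem eq_decide_odd_numChanges {v : ℕ → Bool} (h0 : v 0 = false) (t : ℕ) :
    v t = decide (Odd (numChanges v t)) := by
  induction t with
  | zero => simp [h0, numChanges]
  | succ t ih =>
    rw [numChanges_succ]
    revert ih
    cases v t <;> cases v (t + 1) <;> simp [Nat.odd_add_one]

theorem computable₂_numChanges {f : ℕ → ℕ → Bool} (hf : Computable₂ f) :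
    Computable₂ fun x => numChanges (f x) := by
  have hstep : Computable₂ fun (p : ℕ × ℕ) (q : ℕ × ℕ) =>
      q.2 + cond (f p.1 q.1 == f p.1 (q.1 + 1)) 0 1 := by
    refine Primrec.nat_add.to_comp.comp (Computable.snd.comp .snd)
      (Computable.cond ?_ (.const 0) (.const 1))
    exact Primrec.beq.to_comp.comp (hf.comp (Computable.fst.comp .fst) (Computable.fst.comp .snd))
      (hf.comp (Computable.fst.comp .fst) (Computable.succ.comp (Computable.fst.comp .snd)))
  refine (Computable.nat_rec Computable.snd (Computable.const 0) hstep).of_eq fun p => ?_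
  induction p.2 with
  | zero => simp [numChanges]
  | succ t ih =>
    simp only at ih ⊢
    rw [numChanges_succ, ← ih]
    by_cases h : f p.1 t = f p.1 (t + 1) <;> simp [h, cond_eq_ite]

end Sequences

theorem eventually_iff_of_eventually_eq {β : Type*} {l : Filter β} [l.NeBot] {γ : Type*}
    {u : β → γ} {a : γ} {p : γ → Prop} (h : ∀ᶠ s in l, u s = a) :
    (∀ᶠ s in l, p (u s)) ↔ p a :=
  (eventually_congr (h.mono fun s hs => by rw [hs])).trans eventually_const

theorem NCE.exists_limit_approx {n : ℕ} {A : Set ℕ} (h : NCE n A) :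
    ∃ g : ℕ → ℕ → Bool, Computable₂ g ∧ ∀ x, ∃ s, ∀ t, s ≤ t → (g x t = true ↔ x ∈ A) :=
  let ⟨f, hf, hfx⟩ := h
  ⟨f, hf, fun x => (hfx x).2.1⟩

theorem nce_succ_of_monotone {n : ℕ} {c : ℕ → ℕ → ℕ} (hc : Primrec₂ c)
    (hmono : ∀ x, Monotone (c x)) (hle : ∀ x s, c x s ≤ n) :
    NCE (n + 1) {x | ∀ᶠ s in atTop, Even (c x s)} := by
  have hpred : PrimrecPred fun p : ℕ × ℕ => p.2 ≠ 0 ∧ Even (c p.1 p.2) :=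
    (Primrec.eq.comp Primrec.snd (Primrec.const 0)).not.and
      ((Primrec.eq.comp (Primrec.nat_mod.comp hc (Primrec.const 2)) (Primrec.const 0)).of_eq
        fun p => Nat.even_iff.symm)
  refine ⟨fun x s => decide (s ≠ 0 ∧ Even (c x s)), Primrec₂.to_comp hpred.decide, fun x => ?_⟩
  obtain ⟨hfin, hcard⟩ := changes_finite_and_ncard_le_of_monotone (hmono x) (hle x)
  obtain ⟨T, hT⟩ := exists_forall_ge_eq_of_changes_finite hfin
  have hlim : (∀ᶠ s in atTop, Even (c x s)) ↔ Even (c x T) :=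
    eventually_iff_of_eventually_eq (eventually_atTop.mpr ⟨T, hT⟩)
  have hsub : changes (fun s => decide (s ≠ 0 ∧ Even (c x s))) ⊆ insert 0 (changes (c x)) := by
    intro s hs
    by_cases h0 : s = 0
    · exact Or.inl h0
    · exact Or.inr fun heq => hs (by simp [h0, heq])
  refine ⟨by simp, ⟨T + 1, fun t ht => ?_⟩, (hfin.insert 0).subset hsub, ?_⟩
  · change decide (t ≠ 0 ∧ Even (c x t)) = true ↔ ∀ᶠ s in atTop, Even (c x s)
    rw [hlim, hT t (by omega)]
    simp [show t ≠ 0 by omega]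
  · calc _ ≤ (insert 0 (changes (c x))).ncard := Set.ncard_le_ncard hsub (hfin.insert 0)
      _ ≤ (changes (c x)).ncard + 1 := Set.ncard_insert_le _ _
      _ ≤ n + 1 := by omega

def observe (e k t : ℕ) : ℕ := (evaln k (Denumerable.ofNat Code e) (Nat.pair e t)).getD 0

theorem primrec_observe : Primrec fun p : ℕ × ℕ × ℕ => observe p.1 p.2.1 p.2.2 :=
  Primrec.option_getD.comp
    (primrec_evaln.comp (Primrec.pair
      (Primrec.pair (Primrec.fst.comp Primrec.snd) ((Primrec.ofNat Code).comp Primrec.fst))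
      (Primrec₂.natPair.comp Primrec.fst (Primrec.snd.comp Primrec.snd))))
    (Primrec.const 0)

theorem exists_index_observe {C : ℕ → ℕ → ℕ} (hC : Computable₂ C) :
    ∃ e, (∀ k t, observe e k t ≤ C e t) ∧ ∀ t, ∃ k, observe e k t = C e t := by
  obtain ⟨c, hc⟩ := exists_code.mp (Partrec.nat_iff.mp
    (hC.comp (Computable.fst.comp .unpair) (Computable.snd.comp .unpair)).partrec)
  have hmem : ∀ {k t x}, x ∈ evaln k c (Nat.pair (Encodable.encode c) t) →
      x = C (Encodable.encode c) t := fun hx => by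
    simpa [hc] using evaln_sound hx
  refine ⟨Encodable.encode c, fun k t => ?_, fun t => ?_⟩
  · rw [observe, Denumerable.ofNat_encode]
    cases h : evaln k c (Nat.pair (Encodable.encode c) t) with
    | none => exact Nat.zero_le _
    | some x => exact (hmem h).le
  · obtain ⟨k, hk⟩ := evaln_complete.mp
      (show C (Encodable.encode c) t ∈ eval c (Nat.pair (Encodable.encode c) t) by simp [hc])
    exact ⟨k, by rw [observe, Denumerable.ofNat_encode, Option.mem_def.mp hk, Option.getD_some]⟩

/-- Dovetailing: stage `s + 1` runs input `s.unpair.1` for `s.unpair.2` steps, so every input is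
eventually run long enough to halt if it halts at all. -/
def counter (n e : ℕ) : ℕ → ℕ
  | 0 => 0
  | s + 1 => max (counter n e s) (min n (observe e s.unpair.2 s.unpair.1))

section Counter

variable {n e : ℕ}

theorem counter_mono : Monotone (counter n e) :=
  monotone_nat_of_le_succ fun _ => le_max_left _ _

theorem counter_le (s : ℕ) : counter n e s ≤ n := by
  induction s with
  | zero => exact Nat.zero_le _
  | succ s ih => exact max_le ih (min_le_left _ _)

theorem counter_le_of_observe_le {K : ℕ} (h : ∀ k t, observe e k t ≤ K) (s : ℕ) :
    counter n e s ≤ K := by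
  induction s with
  | zero => exact Nat.zero_le _
  | succ s ih => exact max_le ih ((min_le_right _ _).trans (h _ _))

theorem min_observe_le_counter (k t : ℕ) :
    min n (observe e k t) ≤ counter n e (Nat.pair t k + 1) := by
  simp [counter]

end Counter

theorem primrec₂_counter (n : ℕ) : Primrec₂ (counter n) := by
  have hstep : Primrec₂ fun (e : ℕ) (q : ℕ × ℕ) =>
      max q.2 (min n (observe e q.1.unpair.2 q.1.unpair.1)) :=
    Primrec.nat_max.comp (Primrec.snd.comp .snd) (Primrec.nat_min.comp (.const n)
      (primrec_observe.comp (Primrec.pair .fst (Primrec.pair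
        (Primrec.snd.comp (Primrec.unpair.comp (Primrec.fst.comp .snd)))
        (Primrec.fst.comp (Primrec.unpair.comp (Primrec.fst.comp .snd)))))))
  refine (Primrec.nat_rec (Primrec.const 0) hstep).of_eq fun e s => ?_
  induction s with
  | zero => rfl
  | succ s ih => simp only [counter, ← ih]

def diagonalSet (n : ℕ) : Set ℕ := {e | ∀ᶠ s in atTop, Even (counter n e s)}

theorem nce_succ_diagonalSet (n : ℕ) : NCE (n + 1) (diagonalSet n) :=
  nce_succ_of_monotone (primrec₂_counter n) (fun _ => counter_mono) (fun _ => counter_le)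

theorem not_nce_diagonalSet (n : ℕ) : ¬ NCE n (diagonalSet n) := by
  rintro ⟨f, hf, hfx⟩
  obtain ⟨e, hobs_le, hobs_eq⟩ := exists_index_observe (computable₂_numChanges hf)
  obtain ⟨hf0, ⟨s₀, hs₀⟩, hfin, hcard⟩ := hfx e
  set C := numChanges (f e)
  have hCn : ∀ t, C t ≤ n := fun t => (numChanges_le_ncard hfin t).trans hcard
  obtain ⟨T₀, hT₀⟩ : ∃ T₀, ∀ t, T₀ ≤ t → C t = C T₀ := exists_forall_ge_eq_of_changes_finite
    (changes_finite_and_ncard_le_of_monotone (numChanges_mono (f e)) hCn).1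
  set T := max T₀ s₀
  have hCT : ∀ t, C t ≤ C T := fun t => by
    rw [hT₀ T (le_max_left _ _), ← hT₀ (max t T₀) (le_max_right _ _)]
    exact numChanges_mono _ (le_max_left _ _)
  obtain ⟨k, hk⟩ := hobs_eq T
  have hcounter : ∀ᶠ s in atTop, counter n e s = C T := eventually_atTop.mpr
    ⟨Nat.pair T k + 1, fun s hs => le_antisymm
      (counter_le_of_observe_le (fun k t => (hobs_le k t).trans (hCT t)) s)
      (calc C T = min n (observe e k T) := by rw [hk, min_eq_right (hCn T)]
        _ ≤ counter n e (Nat.pair T k + 1) := min_observe_le_counter k T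
        _ ≤ counter n e s := counter_mono hs)⟩
  have hfT := hs₀ T (le_max_right _ _)
  rw [eq_decide_odd_numChanges hf0, decide_eq_true_iff, diagonalSet, Set.mem_ofPred_eq,
    eventually_iff_of_eventually_eq hcounter] at hfT
  exact not_iff_self (Nat.not_even_iff_odd.trans hfT)

end DifferenceHierarchy

open DifferenceHierarchy in
/-- The difference hierarchy is proper: for every `n ≥ 1` there is a `Δ⁰₂` set
that is `(n+1)`-c.e. but not `n`-c.e. -/
theorem difference_hierarchy_proper :
    ∀ n : ℕ, 1 ≤ n → ∃ A : Set ℕ,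
      (∃ g : ℕ → ℕ → Bool, Computable₂ g ∧
        ∀ x, ∃ s, ∀ t, s ≤ t → (g x t = true ↔ x ∈ A)) ∧
      NCE (n + 1) A ∧ ¬ NCE n A := by
  intro n _
  exact ⟨diagonalSet n, (nce_succ_diagonalSet n).exists_limit_approx,
    nce_succ_diagonalSet n, not_nce_diagonalSet n⟩
end

section
/- The limsup over n of NID(x,y) taken over pairs of strings x, y with |x| = |y| = n equals 1; in particular, for x a random string of length n and y = 0ⁿ, NID(x,y) → 1 as n → ∞. -/
/-- A universal prefix machine: a partial computable binary function
(program, condition) ↦ output, whose domain is prefix-free in the program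
argument, which outputs every string from some program, and which is
optimal (universal) among all partial computable prefix machines. -/
structure PrefixUMachine where
  eval : List Bool → List Bool → Part (List Bool)
  partrec : Partrec fun p : List Bool × List Bool => eval p.1 p.2
  prefixFree : ∀ y p q, (eval p y).Dom → (eval q y).Dom → p <+: q → p = q
  total : ∀ x y : List Bool, ∃ p, x ∈ eval p y
  universal : ∀ M : List Bool → List Bool → Part (List Bool),
      Partrec (fun p : List Bool × List Bool => M p.1 p.2) →
      (∀ y p q, (M p y).Dom → (M q y).Dom → p <+: q → p = q) →
      ∃ c, ∀ x y p, x ∈ M p y → ∃ q, x ∈ eval q y ∧ q.length ≤ p.length + c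

namespace PrefixUMachine

/-- Conditional prefix-free Kolmogorov complexity `K(x|y)`. -/
noncomputable def KC (U : PrefixUMachine) (x y : List Bool) : ℕ :=
  sInf {n | ∃ p, p.length = n ∧ x ∈ U.eval p y}

/-- (Unconditional) prefix-free Kolmogorov complexity `K(x)` (empty condition). -/
noncomputable def K (U : PrefixUMachine) (x : List Bool) : ℕ := U.KC x []

/-- The normalized information distance
`NID(x,y) = max{K(x|y),K(y|x)} / max{K(x),K(y)}`. -/
noncomputable def NID (U : PrefixUMachine) (x y : List Bool) : ℚ :=
  (max (U.KC x y) (U.KC y x) : ℚ) / (max (U.K x) (U.K y) : ℚ)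

theorem exists_min (U : PrefixUMachine) (x y : List Bool) :
    ∃ p, x ∈ U.eval p y ∧ p.length = U.KC x y := by
  obtain ⟨p, hp⟩ := U.total x y
  have h : U.KC x y ∈ {n | ∃ p, p.length = n ∧ x ∈ U.eval p y} :=
    Nat.sInf_mem ⟨p.length, p, rfl, hp⟩
  obtain ⟨q, hq1, hq2⟩ := h
  exact ⟨q, hq2, hq1⟩

/-- A canonical shortest program `x*` for `x`. -/
noncomputable def star (U : PrefixUMachine) (x : List Bool) : List Bool :=
  (exists_min U x []).choose

/-- A computable injective pairing of binary strings. -/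
def pairStr (x y : List Bool) : List Bool := (x.flatMap fun b => [true, b]) ++ false :: y

/-- A set of strings is computably enumerable. -/
def CEStr (A : Set (List Bool)) : Prop :=
  ∃ f : List Bool →. Unit, Partrec f ∧ ∀ x, x ∈ A ↔ (f x).Dom

/-- A set of pairs of strings is computably enumerable. -/
def CEPair (A : Set (List Bool × List Bool)) : Prop :=
  ∃ f : List Bool × List Bool →. Unit, Partrec f ∧ ∀ x, x ∈ A ↔ (f x).Dom

end PrefixUMachine

open PrefixUMachine

/-!
For the upper bound, conditioning never costs more than a constant, `K(x|y) ≤ K(x) + O(1)`,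
while `K(x) → ∞` as `|x| → ∞`; hence `NID(x,y) ≤ 1 + O(1) / max{K(x),K(y)}` tends to `1`
uniformly over pairs of length `n`.

For the lower bound, every `x` of length `n` has `K(x) ≤ n + O(√n)`: a self-delimiting code of
`n` of length `O(√n)` followed by `x` itself describes `x`. So for `|x| = |y| = n` the denominator
is at most `n + O(√n)`, and the numerator is at least `n - O(√n)` as soon as
`K(x|0ⁿ) ≥ n - O(√n)`. This holds for some `x` of every length `n` by counting programs, and for
every random `x` because `K(x) ≤ K(x|0ⁿ) + O(√n)` (prefix a program for `x` given `0ⁿ` with the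
code of `n`).
-/

open Filter

theorem Primrec.list_replicate {α : Type*} [Primcodable α] (a : α) :
    Primrec fun n => List.replicate n a :=
  (Primrec.list_map Primrec.list_range (Primrec.const a).to₂).of_eq fun n => by
    rw [List.map_const', List.length_range]

namespace NatCode

def unary (n : ℕ) : List Bool := List.replicate n true ++ [false]

def readUnary (p : List Bool) : Option (ℕ × List Bool) :=
  if p.idxOf false < p.length then some (p.idxOf false, p.drop (p.idxOf false + 1)) else none

theorem readUnary_unary_append (n : ℕ) (l : List Bool) :
    readUnary (unary n ++ l) = some (n, l) := by
  have hidx : (unary n ++ l).idxOf false = n := by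
    rw [unary, List.append_assoc, List.idxOf_append_of_notMem (by simp)]
    simp
  rw [readUnary, hidx]
  simp [unary, List.drop_append]

theorem readUnary_append {p r : List Bool} {n : ℕ} (h : readUnary p = some (n, r))
    (t : List Bool) : readUnary (p ++ t) = some (n, r ++ t) := by
  unfold readUnary at h ⊢
  split_ifs at h with hp
  obtain ⟨rfl, rfl⟩ := Prod.mk.inj (Option.some_injective _ h)
  have hmem := List.idxOf_lt_length_iff.mp hp
  rw [List.idxOf_append_of_mem hmem, if_pos (by simp; omega),
    List.drop_append_of_le_length hp]

theorem primrec_readUnary : Primrec readUnary := by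
  unfold readUnary
  have hidx : Primrec fun p : List Bool => p.idxOf false :=
    Primrec.list_idxOf.comp (Primrec.const false) Primrec.id
  exact Primrec.ite (Primrec.nat_lt.comp hidx Primrec.list_length)
    (Primrec.option_some.comp (hidx.pair
      (Primrec.list_drop.comp (Primrec.succ.comp hidx) Primrec.id)))
    (Primrec.const none)

/-- Writes `n = m * m + r` with `m = √n` and `r ≤ 2m`, both in unary, so the code has length
`O(√n)`. -/
def encode (n : ℕ) : List Bool := unary n.sqrt ++ unary (n - n.sqrt * n.sqrt)

def decode (p : List Bool) : Option (ℕ × List Bool) :=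
  (readUnary p).bind fun a => (readUnary a.2).map fun b => (a.1 * a.1 + b.1, b.2)

theorem decode_encode_append (n : ℕ) (l : List Bool) : decode (encode n ++ l) = some (n, l) := by
  have := Nat.sqrt_le n
  simp only [decode, encode, List.append_assoc, readUnary_unary_append, Option.bind_some,
    Option.map_some]
  congr 2
  omega

theorem decode_append {p r : List Bool} {n : ℕ} (h : decode p = some (n, r)) (t : List Bool) :
    decode (p ++ t) = some (n, r ++ t) := by
  obtain ⟨⟨m, q⟩, hm, hq⟩ := Option.bind_eq_some_iff.mp h
  obtain ⟨⟨k, r'⟩, hk, hr⟩ := Option.map_eq_some_iff.mp hq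
  simp only [Prod.mk.injEq] at hr
  obtain ⟨rfl, rfl⟩ := hr
  simp [decode, readUnary_append hm, readUnary_append hk]

theorem length_encode_le (n : ℕ) : (encode n).length ≤ 3 * n.sqrt + 2 := by
  have := Nat.sqrt_le_add n
  simp only [encode, unary, List.length_append, List.length_replicate, List.length_singleton]
  omega

theorem primrec_decode : Primrec decode :=
  Primrec.option_bind primrec_readUnary <| Primrec.option_map
    (primrec_readUnary.comp (Primrec.snd.comp Primrec.snd))
    (Primrec.pair (Primrec.nat_add.comp
      (Primrec.nat_mul.comp (Primrec.fst.comp (Primrec.snd.comp Primrec.fst))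
        (Primrec.fst.comp (Primrec.snd.comp Primrec.fst)))
      (Primrec.fst.comp Primrec.snd)) (Primrec.snd.comp Primrec.snd)).to₂

end NatCode

theorem card_sigma_vector_bool_lt (n : ℕ) :
    Fintype.card (Σ k : Fin n, List.Vector Bool k) < 2 ^ n := by
  simp only [Fintype.card_sigma, card_vector, Fintype.card_bool]
  rw [Fin.sum_univ_eq_sum_range (2 ^ ·) n, Nat.geomSum_eq le_rfl]
  have := Nat.one_le_two_pow (n := n)
  omega

theorem eventually_add_mul_sqrt_lt (a b : ℚ) {ε : ℚ} (hε : 0 < ε) :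
    ∀ᶠ n : ℕ in atTop, a + b * n.sqrt < ε * n := by
  obtain ⟨m, hm⟩ := exists_nat_gt (2 * b / ε)
  obtain ⟨N, hN⟩ := exists_nat_gt (2 * a / ε)
  filter_upwards [eventually_ge_atTop (m * m), eventually_ge_atTop N] with n hmn hNn
  have hsqrt : (m : ℚ) * n.sqrt ≤ n := by
    have h₁ : m ≤ n.sqrt := Nat.le_sqrt.mpr hmn
    have h₂ : n.sqrt * n.sqrt ≤ n := Nat.sqrt_le n
    exact_mod_cast (Nat.mul_le_mul_right _ h₁).trans h₂
  have hb : 2 * b < ε * m := by rw [div_lt_iff₀ hε] at hm; linarith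
  have ha : 2 * a < ε * n := by
    rw [div_lt_iff₀ hε] at hN
    have : (N : ℚ) ≤ n := by exact_mod_cast hNn
    nlinarith
  have : 2 * b * n.sqrt ≤ ε * m * n.sqrt := by gcongr
  nlinarith

theorem one_sub_lt_div {ε n s t a D : ℚ} (hε : 0 ≤ ε) (ha : 0 ≤ a) (hD : 0 < D) (ht : 0 ≤ t)
    (hDle : D ≤ n + t) (hle : n - s ≤ a) (hst : s + t < ε * n) : 1 - ε < a / D := by
  rcases le_or_gt ε 1 with h | h
  · rw [lt_div_iff₀ hD]
    nlinarith
  · exact (sub_neg.2 h).trans_le (div_nonneg ha hD.le)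

namespace PrefixUMachine

variable (U : PrefixUMachine)

theorem KC_le_length_of_mem {x y p : List Bool} (h : x ∈ U.eval p y) : U.KC x y ≤ p.length :=
  Nat.sInf_le ⟨p, rfl, h⟩

theorem exists_KC_le_of_prefixFree (M : List Bool → List Bool → Part (List Bool))
    (hM : Partrec fun p : List Bool × List Bool => M p.1 p.2)
    (hpf : ∀ y p q, (M p y).Dom → (M q y).Dom → p <+: q → p = q) :
    ∃ c, ∀ x y p, x ∈ M p y → U.KC x y ≤ p.length + c := by
  obtain ⟨c, hc⟩ := U.universal M hM hpf
  refine ⟨c, fun x y p hp => ?_⟩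
  obtain ⟨q, hq, hlen⟩ := hc x y p hp
  exact (U.KC_le_length_of_mem hq).trans hlen

theorem exists_KC_le_K_add : ∃ c, ∀ x y, U.KC x y ≤ U.K x + c := by
  obtain ⟨c, hc⟩ := U.exists_KC_le_of_prefixFree (fun p _ => U.eval p [])
    (U.partrec.comp (Computable.fst.pair (Computable.const []))) (fun _ => U.prefixFree [])
  refine ⟨c, fun x y => ?_⟩
  obtain ⟨p, hp, hlen⟩ := U.exists_min x []
  rw [K, ← hlen]
  exact hc x y p hp

/-- The machine outputs its program when the program has the length of the condition; it is
prefix-free because all its halting programs for a given condition have the same length. -/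
theorem exists_KC_le_length_add :
    ∃ c, ∀ x y : List Bool, x.length = y.length → U.KC x y ≤ x.length + c := by
  obtain ⟨c, hc⟩ := U.exists_KC_le_of_prefixFree
    (fun p y => ((if p.length = y.length then some p else none : Option (List Bool)) :
      Part (List Bool)))
    (Computable.ofOption (Primrec.ite
      (Primrec.eq.comp (Primrec.list_length.comp Primrec.fst)
        (Primrec.list_length.comp Primrec.snd))
      (Primrec.option_some.comp Primrec.fst) (Primrec.const none)).to_comp)
    (fun y p q hp hq hpq => by
      simp only [Part.ofOption_dom, Option.isSome_ite] at hp hq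
      exact hpq.eq_of_length (hp.trans hq.symm))
  exact ⟨c, fun x y h => hc x y x (by simp [h])⟩

theorem exists_K_le_KC_replicate_add :
    ∃ c, ∀ x n, U.K x ≤ U.KC x (List.replicate n false) + (NatCode.encode n).length + c := by
  obtain ⟨c, hc⟩ := U.exists_KC_le_of_prefixFree
    (fun p _ => (NatCode.decode p : Part (ℕ × List Bool)).bind
      fun a => U.eval a.2 (List.replicate a.1 false))
    ((Computable.ofOption (NatCode.primrec_decode.to_comp.comp Computable.fst)).bind
      (U.partrec.comp ((Computable.snd.comp Computable.snd).pair
        ((Primrec.list_replicate false).to_comp.comp (Computable.fst.comp Computable.snd)))).to₂)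
    (by
      rintro y p _ hp hq ⟨t, rfl⟩
      obtain ⟨v, hv⟩ := Part.dom_iff_mem.mp hp
      obtain ⟨⟨n, r⟩, hdec, hr⟩ := Part.mem_bind_iff.mp hv
      obtain ⟨w, hw⟩ := Part.dom_iff_mem.mp hq
      obtain ⟨_, hdec', hr'⟩ := Part.mem_bind_iff.mp hw
      rw [Part.mem_ofOption, Option.mem_def] at hdec hdec'
      rw [NatCode.decode_append hdec t, Option.some_inj] at hdec'
      subst hdec'
      have := U.prefixFree _ r (r ++ t) (Part.dom_iff_mem.mpr ⟨v, hr⟩)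
        (Part.dom_iff_mem.mpr ⟨w, hr'⟩) (List.prefix_append r t)
      simpa using this)
  refine ⟨c, fun x n => ?_⟩
  obtain ⟨p, hp, hlen⟩ := U.exists_min x (List.replicate n false)
  have := hc x [] (NatCode.encode n ++ p)
    (Part.mem_bind_iff.mpr ⟨(n, p), by simp [NatCode.decode_encode_append], hp⟩)
  rw [List.length_append, hlen] at this
  rw [K]
  omega

theorem exists_K_le_length_add :
    ∃ c, ∀ x : List Bool, U.K x ≤ x.length + (NatCode.encode x.length).length + c := by
  obtain ⟨c₁, h₁⟩ := U.exists_KC_le_length_add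
  obtain ⟨c₂, h₂⟩ := U.exists_K_le_KC_replicate_add
  refine ⟨c₁ + c₂, fun x => ?_⟩
  have := h₁ x (List.replicate x.length false) List.length_replicate.symm
  have := h₂ x x.length
  omega

theorem exists_length_eq_le_KC (n : ℕ) (y : List Bool) :
    ∃ x : List Bool, x.length = n ∧ n ≤ U.KC x y := by
  by_contra! h
  have hprog (v : List.Vector Bool n) : ∃ p, v.1 ∈ U.eval p y ∧ p.length < n := by
    obtain ⟨p, hp, hlen⟩ := U.exists_min v.1 y
    exact ⟨p, hp, hlen ▸ h v.1 v.2⟩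
  choose prog hmem hlen using hprog
  let f (v : List.Vector Bool n) : Σ k : Fin n, List.Vector Bool k := ⟨⟨_, hlen v⟩, ⟨prog v, rfl⟩⟩
  have hf : f.Injective := fun v w hvw => by
    have hp : prog v = prog w := congrArg (fun s => s.2.toList) hvw
    exact Subtype.ext (Part.mem_unique (hmem v) (hp ▸ hmem w))
  have := Fintype.card_le_of_injective f hf
  rw [card_vector, Fintype.card_bool] at this
  exact (card_sigma_vector_bool_lt n).not_ge this

theorem finite_setOf_KC_le (y : List Bool) (m : ℕ) : {x | U.KC x y ≤ m}.Finite := by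
  classical
  let out (p : List Bool) : List Bool := if h : (U.eval p y).Dom then (U.eval p y).get h else []
  refine ((List.finite_length_le Bool m).image out).subset fun x hx => ?_
  obtain ⟨p, hp, hlen⟩ := U.exists_min x y
  refine ⟨p, hlen.trans_le hx, ?_⟩
  simp only [out, dif_pos (Part.dom_iff_mem.mpr ⟨x, hp⟩), Part.get_eq_of_mem hp]

theorem eventually_lt_K (m : ℕ) : ∀ᶠ n in atTop, ∀ x : List Bool, x.length = n → m < U.K x := by
  obtain ⟨N, hN⟩ := ((U.finite_setOf_KC_le [] m).image List.length).bddAbove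
  filter_upwards [eventually_gt_atTop N] with n hn x hx
  by_contra! hK
  exact (hN ⟨x, hK, hx⟩).not_gt hn

theorem exists_NID_le_one_add :
    ∃ c : ℕ, ∀ x y, U.NID x y ≤ 1 + c / max (U.K x : ℚ) (U.K y) := by
  obtain ⟨c, hc⟩ := U.exists_KC_le_K_add
  refine ⟨c, fun x y => ?_⟩
  rcases (show (0 : ℚ) ≤ max (U.K x : ℚ) (U.K y) by positivity).eq_or_lt with hD | hD
  · simp [NID, ← hD]
  · have hx : (U.KC x y : ℚ) ≤ U.K x + c := by exact_mod_cast hc x y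
    have hy : (U.KC y x : ℚ) ≤ U.K y + c := by exact_mod_cast hc y x
    rw [NID, div_le_iff₀ hD, add_mul, one_mul, div_mul_cancel₀ _ hD.ne']
    exact max_le (hx.trans (by gcongr; exact le_max_left _ _))
      (hy.trans (by gcongr; exact le_max_right _ _))

theorem eventually_NID_lt_one_add {ε : ℚ} (hε : 0 < ε) :
    ∀ᶠ n in atTop, ∀ x y : List Bool, x.length = n → y.length = n → U.NID x y < 1 + ε := by
  obtain ⟨c, hc⟩ := U.exists_NID_le_one_add
  obtain ⟨m, hm⟩ := exists_nat_gt (c / ε)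
  filter_upwards [U.eventually_lt_K m] with n hn x y hx _
  have hK : (m : ℚ) < max (U.K x : ℚ) (U.K y) :=
    (Nat.cast_lt.mpr (hn x hx)).trans_le (le_max_left _ _)
  have hD : 0 < max (U.K x : ℚ) (U.K y) := lt_of_le_of_lt (Nat.cast_nonneg m) hK
  calc U.NID x y ≤ 1 + c / max (U.K x : ℚ) (U.K y) := hc x y
    _ < 1 + ε := by
      rw [add_lt_add_iff_left, div_lt_iff₀ hD]
      rw [div_lt_iff₀ hε] at hm
      nlinarith

theorem eventually_one_sub_lt_NID {x y : ℕ → List Bool} (hx : ∀ n, (x n).length = n)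
    (hy : ∀ n, (y n).length = n) {c : ℕ}
    (hKC : ∀ n, n ≤ U.KC (x n) (y n) + (NatCode.encode n).length + c) {ε : ℚ} (hε : 0 < ε) :
    ∀ᶠ n in atTop, 1 - ε < U.NID (x n) (y n) := by
  obtain ⟨c', hK⟩ := U.exists_K_le_length_add
  filter_upwards [U.eventually_lt_K 0, eventually_add_mul_sqrt_lt (c + c' + 4) 6 hε]
    with n hpos hsmall
  have hL : ((NatCode.encode n).length : ℚ) ≤ 3 * n.sqrt + 2 := by
    exact_mod_cast NatCode.length_encode_le n
  have hKx : (U.K (x n) : ℚ) ≤ n + (NatCode.encode n).length + c' := by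
    exact_mod_cast hx n ▸ hK (x n)
  have hKy : (U.K (y n) : ℚ) ≤ n + (NatCode.encode n).length + c' := by
    exact_mod_cast hy n ▸ hK (y n)
  have hKC' : (n : ℚ) ≤ U.KC (x n) (y n) + (NatCode.encode n).length + c := by
    exact_mod_cast hKC n
  refine one_sub_lt_div (n := n) (s := (NatCode.encode n).length + c)
    (t := (NatCode.encode n).length + c') hε.le (by positivity)
    (lt_max_of_lt_left (by exact_mod_cast hpos (x n) (hx n))) (by positivity)
    (max_le (by linarith) (by linarith)) ?_ (by linarith)
  linarith [le_max_left (U.KC (x n) (y n) : ℚ) (U.KC (y n) (x n))]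

end PrefixUMachine

/-- The limsup of `NID(x,y)` over pairs with `|x| = |y| = n` equals 1;
in particular, for random `x` of length `n` and `y = 0ⁿ`,
`NID(x,y) → 1` as `n → ∞`. -/
theorem nid_limsup_one (U : PrefixUMachine) :
    (∀ ε : ℚ, 0 < ε →
      {n : ℕ | ∃ x y : List Bool, x.length = n ∧ y.length = n ∧
        1 - ε < U.NID x y}.Infinite ∧
      ∃ N, ∀ n, N ≤ n → ∀ x y : List Bool, x.length = n → y.length = n →
        U.NID x y < 1 + ε) ∧
    ∀ x : ℕ → List Bool, (∀ n, (x n).length = n ∧ n ≤ U.K (x n)) →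
      ∀ ε : ℚ, 0 < ε → ∃ N, ∀ n, N ≤ n →
        |U.NID (x n) (List.replicate n false) - 1| < ε := by
  refine ⟨fun ε hε => ⟨?_, eventually_atTop.mp (U.eventually_NID_lt_one_add hε)⟩,
    fun x hx ε hε => ?_⟩
  · choose x hx hKC using fun n => U.exists_length_eq_le_KC n (List.replicate n false)
    refine Nat.frequently_atTop_iff_infinite.mp (Eventually.frequently ?_)
    filter_upwards [U.eventually_one_sub_lt_NID (y := fun n => List.replicate n false) (c := 0)
      hx (fun n => List.length_replicate) (fun n => (hKC n).trans (by omega)) hε] with n hn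
    exact ⟨x n, _, hx n, List.length_replicate, hn⟩
  · obtain ⟨c, hc⟩ := U.exists_K_le_KC_replicate_add
    refine eventually_atTop.mp ?_
    filter_upwards [U.eventually_one_sub_lt_NID (y := fun n => List.replicate n false)
      (fun n => (hx n).1) (fun n => List.length_replicate) (fun n => (hx n).2.trans (hc (x n) n))
      hε,
      U.eventually_NID_lt_one_add hε] with n hlow hup
    have := hup (x n) (List.replicate n false) (hx n).1 List.length_replicate
    rw [abs_sub_lt_iff]
    constructor <;> linarith
end
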